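/- For all natural numbers m and k with m ≥ 4 and 1 ≤ k ≤ m, one has 2 · Σ_{i=0}^{k−1} C(m, i) ≤ m^k, where C(m, i) denotes the binomial coefficient. -/

import Mathlib

open Finset

theorem two_mul_sum_range_choose_le_pow {m : ℕ} (hm : 3 ≤ m) (k : ℕ) :
    2 * ∑ i ∈ range k, m.choose i ≤ m ^ k := by
  induction k with
  | zero => simp
  | succ k ih =>
    calc 2 * ∑ i ∈ range (k + 1), m.choose i
        = 2 * ∑ i ∈ range k, m.choose i + 2 * m.choose k := by
          rw [sum_range_succ, Nat.mul_add]
      _ ≤ m ^ k + 2 * m ^ k := by gcongr; exact Nat.choose_le_pow m k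
      _ = m ^ k * 3 := by ring
      _ ≤ m ^ k * m := Nat.mul_le_mul_left _ hm
      _ = m ^ (k + 1) := (pow_succ m k).symm

theorem stmt4_general (m k : ℕ) (hm : 4 ≤ m) :
    2 * ∑ i ∈ Finset.range k, Nat.choose m i ≤ m ^ k :=
  two_mul_sum_range_choose_le_pow (by omega) k

/-- For `m ≥ 4` and `1 ≤ k ≤ m`: `2 · Σ_{i<k} C(m,i) ≤ m^k`. -/
theorem stmt4 (m k : ℕ) (hm : 4 ≤ m) (hk1 : 1 ≤ k) (hkm : k ≤ m) :
    2 * ∑ i ∈ Finset.range k, Nat.choose m i ≤ m ^ k :=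
  stmt4_general m k hm
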